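/- arXiv:2604.16041 — 2 statements merged into one kernel-verified Lean document; each statement's English description precedes it below -/
import Mathlib

section
/- Let A be a Hermitian n×n matrix, 𝓑 a *-closed unital subspace of M_n(ℂ), and suppose there exists a nonzero Hermitian matrix X with tr(XB) = 0 for all B ∈ 𝓑 and A X = ‖A‖ |X|. Then A is 𝓑-minimal, i.e., ‖A‖ ≤ ‖A + B‖ for all Hermitian B ∈ 𝓑. -/
open Matrix
open scoped Matrix ComplexOrder

noncomputable def opNorm {n : ℕ} (A : Matrix (Fin n) (Fin n) ℂ) : ℝ :=
  ‖Matrix.toEuclideanCLM (𝕜 := ℂ) (n := Fin n) A‖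

/-!
Write `d` for the eigenvalues and `(bᵢ)` for an orthonormal eigenbasis of `X`. For every matrix
`M`, `tr (M X) = ∑ dᵢ ⟪bᵢ, M bᵢ⟫`, so `|tr (M X)| ≤ ‖M‖ ∑ |dᵢ| = ‖M‖ tr |X|`. The certificate gives
`tr ((A + B) X) = tr (A X) = ‖A‖ tr |X|`, since `X` is trace-orthogonal to `B`, and dividing by
`tr |X| > 0` yields `‖A‖ ≤ ‖A + B‖`.
-/

open scoped InnerProductSpace MatrixOrder

namespace Matrix

variable {𝕜 n : Type*} [RCLike 𝕜] [Fintype n] [DecidableEq n]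

theorem cfcAbs_eq_eigenvectorUnitary_conj_sqrt (X : Matrix n n 𝕜) :
    CFC.abs X = ((posSemidef_conjTranspose_mul_self X).1.eigenvectorUnitary : Matrix n n 𝕜) *
      diagonal (RCLike.ofReal ∘ Real.sqrt ∘ (posSemidef_conjTranspose_mul_self X).1.eigenvalues) *
      (star (posSemidef_conjTranspose_mul_self X).1.eigenvectorUnitary : Matrix n n 𝕜) := by
  rw [CFC.abs, CFC.sqrt_eq_real_sqrt _ (star_mul_self_nonneg X), cfcₙ_eq_cfc,
    star_eq_conjTranspose, (posSemidef_conjTranspose_mul_self X).1.cfc_eq, IsHermitian.cfc,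
    Unitary.conjStarAlgAut_apply]

namespace IsHermitian

variable {X : Matrix n n 𝕜} (hX : X.IsHermitian)
include hX

theorem trace_cfcAbs : trace (CFC.abs X) = ((∑ i, |hX.eigenvalues i| : ℝ) : 𝕜) := by
  rw [CFC.abs_eq_cfc_norm X hX.isSelfAdjoint, hX.cfc_eq, IsHermitian.cfc,
    Unitary.conjStarAlgAut_apply, trace_mul_cycle, Unitary.coe_star_mul_self]
  simp

theorem sum_abs_eigenvalues_pos (hX0 : X ≠ 0) : 0 < ∑ i, |hX.eigenvalues i| := by
  obtain ⟨i, hi⟩ := Function.ne_iff.mp (mt hX.eigenvalues_eq_zero_iff.mp hX0)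
  exact Finset.sum_pos' (fun j _ => abs_nonneg _) ⟨i, Finset.mem_univ i, abs_pos.mpr hi⟩

theorem toEuclideanCLM_eigenvectorBasis (i : n) :
    toEuclideanCLM (𝕜 := 𝕜) (n := n) X (hX.eigenvectorBasis i) =
      (hX.eigenvalues i : 𝕜) • hX.eigenvectorBasis i := by
  apply WithLp.ofLp_injective
  rw [ofLp_toEuclideanCLM, hX.mulVec_eigenvectorBasis, WithLp.ofLp_smul,
    RCLike.real_smul_eq_coe_smul (K := 𝕜)]

theorem trace_mul_eq_sum_eigenvalues_mul_inner (M : Matrix n n 𝕜) :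
    trace (M * X) = ∑ i, (hX.eigenvalues i : 𝕜) *
      ⟪hX.eigenvectorBasis i, toEuclideanCLM (𝕜 := 𝕜) (n := n) M (hX.eigenvectorBasis i)⟫_𝕜 := by
  rw [← trace_toLin_eq (M * X) (EuclideanSpace.basisFun n 𝕜).toBasis,
    ← toEuclideanLin_eq_toLin_orthonormal, LinearMap.trace_eq_sum_inner _ hX.eigenvectorBasis]
  refine Finset.sum_congr rfl fun i _ => ?_
  rw [← coe_toEuclideanCLM_eq_toEuclideanLin, map_mul, ContinuousLinearMap.coe_coe,
    mul_apply_eq_comp, hX.toEuclideanCLM_eigenvectorBasis, map_smul, inner_smul_right]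

theorem norm_trace_mul_le (M : Matrix n n 𝕜) :
    ‖trace (M * X)‖ ≤ ‖toEuclideanCLM (𝕜 := 𝕜) (n := n) M‖ * ∑ i, |hX.eigenvalues i| := by
  rw [hX.trace_mul_eq_sum_eigenvalues_mul_inner]
  set T := toEuclideanCLM (𝕜 := 𝕜) (n := n) M
  set b := hX.eigenvectorBasis
  have hdiag (i : n) : ‖⟪b i, T (b i)⟫_𝕜‖ ≤ ‖T‖ :=
    calc ‖⟪b i, T (b i)⟫_𝕜‖ ≤ ‖b i‖ * (‖T‖ * ‖b i‖) :=
          (norm_inner_le_norm _ _).trans (by gcongr; exact T.le_opNorm _)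
      _ = ‖T‖ := by simp [b.norm_eq_one]
  calc ‖∑ i, (hX.eigenvalues i : 𝕜) * ⟪b i, T (b i)⟫_𝕜‖
        ≤ ∑ i, |hX.eigenvalues i| * ‖⟪b i, T (b i)⟫_𝕜‖ :=
        (norm_sum_le _ _).trans_eq (by simp [norm_mul])
    _ ≤ ∑ i, |hX.eigenvalues i| * ‖T‖ := by gcongr with i; exact hdiag i
    _ = ‖T‖ * ∑ i, |hX.eigenvalues i| := by rw [← Finset.sum_mul, mul_comm]

end IsHermitian

end Matrix

theorem minimal_of_certificate_general {n : ℕ}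
    (A : Matrix (Fin n) (Fin n) ℂ)
    (𝓑 : Submodule ℂ (Matrix (Fin n) (Fin n) ℂ))
    (X : Matrix (Fin n) (Fin n) ℂ) (hXher : X.IsHermitian) (hXne : X ≠ 0)
    (horth : ∀ B ∈ 𝓑, Matrix.trace (X * B) = 0)
    (hcert : A * X = ((opNorm A : ℝ) : ℂ) •
      (((Matrix.posSemidef_conjTranspose_mul_self X).1.eigenvectorUnitary : Matrix (Fin n) (Fin n) ℂ) *
        diagonal ((fun r : ℝ => (r : ℂ)) ∘ Real.sqrt ∘ (Matrix.posSemidef_conjTranspose_mul_self X).1.eigenvalues) *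
        (star (Matrix.posSemidef_conjTranspose_mul_self X).1.eigenvectorUnitary : Matrix (Fin n) (Fin n) ℂ))) :
    ∀ B ∈ 𝓑, B.IsHermitian → opNorm A ≤ opNorm (A + B) := by
  intro B hB _
  set t := ∑ i, |hXher.eigenvalues i|
  have habs : A * X = (opNorm A : ℂ) • CFC.abs X := by
    rw [hcert, cfcAbs_eq_eigenvectorUnitary_conj_sqrt]
    rfl
  have htrace_A : trace (A * X) = ((opNorm A * t : ℝ) : ℂ) := by
    rw [habs, trace_smul, hXher.trace_cfcAbs, smul_eq_mul]
    simp [t]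
  have htrace_AB : trace ((A + B) * X) = ((opNorm A * t : ℝ) : ℂ) := by
    rw [add_mul, trace_add, trace_mul_comm B, horth B hB, add_zero, htrace_A]
  have hbound := hXher.norm_trace_mul_le (A + B)
  rw [htrace_AB, Complex.norm_real] at hbound
  exact le_of_mul_le_mul_right ((Real.le_norm_self _).trans hbound)
    (hXher.sum_abs_eigenvalues_pos hXne)

/-- If a Hermitian `A` admits a nonzero Hermitian certificate `X`,
trace-orthogonal to the `*`-closed unital subspace `𝓑`, with
`A X = ‖A‖ |X|`, then `A` is `𝓑`-minimal. -/
theorem minimal_of_certificate {n : ℕ}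
    (A : Matrix (Fin n) (Fin n) ℂ) (hA : A.IsHermitian)
    (𝓑 : Submodule ℂ (Matrix (Fin n) (Fin n) ℂ))
    (hI : (1 : Matrix (Fin n) (Fin n) ℂ) ∈ 𝓑)
    (hstar : ∀ B ∈ 𝓑, Bᴴ ∈ 𝓑)
    (X : Matrix (Fin n) (Fin n) ℂ) (hXher : X.IsHermitian) (hXne : X ≠ 0)
    (horth : ∀ B ∈ 𝓑, Matrix.trace (X * B) = 0)
    (hcert : A * X = ((opNorm A : ℝ) : ℂ) •
      (((Matrix.posSemidef_conjTranspose_mul_self X).1.eigenvectorUnitary : Matrix (Fin n) (Fin n) ℂ) *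
        diagonal ((fun r : ℝ => (r : ℂ)) ∘ Real.sqrt ∘ (Matrix.posSemidef_conjTranspose_mul_self X).1.eigenvalues) *
        (star (Matrix.posSemidef_conjTranspose_mul_self X).1.eigenvectorUnitary : Matrix (Fin n) (Fin n) ℂ))) :
    ∀ B ∈ 𝓑, B.IsHermitian → opNorm A ≤ opNorm (A + B) :=
  minimal_of_certificate_general A 𝓑 X hXher hXne horth hcert
end

section
/- Let A(x) = A₀ + Σ_{k=1}^t x_k B_k with A₀, B_k Hermitian, and let S_max be the eigenspace of λ_max(A(x₀)) at a point x₀ ∈ ℝᵗ. Then the subdifferential of the convex function x ↦ λ_max(A(x)) at x₀ equals m_{S_max} = conv{(⟨B_1 v, v⟩, …, ⟨B_t v, v⟩) : v ∈ S_max, ‖v‖ = 1} ⊆ ℝᵗ. -/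
open Matrix
open scoped Matrix ComplexOrder

/-- The largest eigenvalue of a matrix, as the supremum of its real
eigenvalues. -/
noncomputable def lambdaMax {n : ℕ} (A : Matrix (Fin n) (Fin n) ℂ) : ℝ :=
  sSup {r : ℝ | Module.End.HasEigenvalue (Matrix.toEuclideanLin A) (r : ℂ)}

/-- The subdifferential of `f : ℝᵗ → ℝ` at `x₀`. -/
def subdiff {t : ℕ} (f : (Fin t → ℝ) → ℝ) (x₀ : Fin t → ℝ) : Set (Fin t → ℝ) :=
  {v | ∀ y, f y - f x₀ ≥ ∑ k, v k * (y k - x₀ k)}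

/-! Every unit vector `v` of the top eigenspace gives an affine minorant `x ↦ ⟨A(x) v, v⟩` of
`λ_max ∘ A` that is exact at `x₀`; its slope is the moment vector `m(v)`, so the moment set and
its convex hull consist of subgradients. Conversely, a subgradient `g` outside the (compact) hull
is strictly separated from it by a direction `d`. Comparing the subgradient inequality at
`x₀ + s d` with unit top eigenvectors of `A(x₀ + s d)` and letting `s → 0⁺` (compactness of the
unit sphere) yields a unit top eigenvector `v` of `A(x₀)` with `⟨g, d⟩ ≤ ⟨m(v), d⟩`, which
contradicts the separation. -/

open Set Filter Topology Module End InnerProductSpace RCLike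

theorem IsCompact.convexHull_of_finiteDimensional {E : Type*} [AddCommGroup E] [Module ℝ E]
    [TopologicalSpace E] [ContinuousAdd E] [ContinuousSMul ℝ E] [FiniteDimensional ℝ E]
    {s : Set E} (hs : IsCompact s) : IsCompact (convexHull ℝ s) := by
  -- Carathéodory: a point of the hull is a convex combination of at most `finrank ℝ E + 1`
  -- points of `s`, so the hull is a finite union of continuous images of compact sets.
  have hcover : convexHull ℝ s = ⋃ k ∈ Finset.range (finrank ℝ E + 2),
      (fun p : (Fin k → ℝ) × (Fin k → E) => ∑ i, p.1 i • p.2 i) ''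
        (stdSimplex ℝ (Fin k) ×ˢ univ.pi fun _ => s) := by
    refine Subset.antisymm (fun x hx => ?_) ?_
    · obtain ⟨ι, _, z, w, hzs, hz, hw0, hw1, rfl⟩ := eq_pos_convex_span_of_mem_convexHull hx
      have hcard : Fintype.card ι < finrank ℝ E + 2 := by
        have := Submodule.finrank_le (vectorSpan ℝ (range z))
        have := hz.card_le_finrank_succ
        omega
      set e := (Fintype.equivFin ι).symm
      refine mem_biUnion (Finset.mem_range.2 hcard) ⟨(w ∘ e, z ∘ e), ⟨⟨fun i => (hw0 _).le, ?_⟩,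
        fun i _ => hzs (mem_range_self _)⟩, e.sum_comp fun i => w i • z i⟩
      rwa [Function.comp_def, e.sum_comp w]
    · simp only [iUnion_subset_iff, image_subset_iff]
      rintro k - ⟨w, z⟩ ⟨⟨hw0, hw1⟩, hz⟩
      exact (convex_convexHull ℝ s).sum_mem (fun i _ => hw0 i) hw1
        fun i _ => subset_convexHull ℝ s (hz i trivial)
  rw [hcover]
  exact (Finset.range _).isCompact_biUnion fun k _ =>
    ((isCompact_stdSimplex ℝ (Fin k)).prod (isCompact_univ_pi fun _ => hs)).image (by fun_prop)

-- Danskin's argument: as `s → 0⁺`, near-maximisers of `R + s h` accumulate at maximisers of `R`.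
theorem IsCompact.exists_eq_and_le_of_forall_pos {X : Type*} [TopologicalSpace X] {K : Set X}
    (hK : IsCompact K) {R h : X → ℝ} (hR : Continuous R) (hh : Continuous h) {r c : ℝ}
    (hRle : ∀ v ∈ K, R v ≤ r) (hpert : ∀ s > 0, ∃ v ∈ K, r + s * c ≤ R v + s * h v) :
    ∃ v ∈ K, R v = r ∧ c ≤ h v := by
  have hF : IsCompact (K ∩ {v | c ≤ h v}) := hK.inter_right (isClosed_le continuous_const hh)
  obtain ⟨C, hC⟩ := hK.bddAbove_image hh.continuousOn
  have hnear : ∀ s > 0, ∃ v ∈ K ∩ {v | c ≤ h v}, r - s * (C - c) ≤ R v := by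
    intro s hs
    obtain ⟨v, hvK, hv⟩ := hpert s hs
    have hcv : c ≤ h v := le_of_mul_le_mul_left (by linarith [hRle v hvK]) hs
    have hhv : h v ≤ C := hC (mem_image_of_mem h hvK)
    exact ⟨v, ⟨hvK, hcv⟩, by nlinarith⟩
  obtain ⟨v₁, hv₁, -⟩ := hnear 1 one_pos
  obtain ⟨v, hvF, hvmax⟩ := hF.exists_isMaxOn ⟨v₁, hv₁⟩ hR.continuousOn
  refine ⟨v, hvF.1, le_antisymm (hRle v hvF.1) ?_, hvF.2⟩
  have hlim : Tendsto (fun s : ℝ => r - s * (C - c)) (𝓝[>] 0) (𝓝 r) :=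
    ((by fun_prop : Continuous fun s : ℝ => r - s * (C - c)).tendsto' 0 r
      (by simp)).mono_left nhdsWithin_le_nhds
  refine le_of_tendsto hlim (eventually_nhdsWithin_of_forall fun s hs => ?_)
  obtain ⟨w, hwF, hw⟩ := hnear s hs
  exact hw.trans (hvmax hwF)

section Rayleigh

variable {𝕜 E : Type*} [RCLike 𝕜] [NormedAddCommGroup E] [InnerProductSpace 𝕜 E]

theorem re_inner_ofReal_smul_self (r : ℝ) (v : E) : re ⟪(r : 𝕜) • v, v⟫_𝕜 = r * ‖v‖ ^ 2 := by
  rw [inner_smul_left, conj_ofReal, inner_self_eq_norm_sq_to_K]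
  norm_cast

variable [FiniteDimensional 𝕜 E]

theorem LinearMap.bddAbove_range_rayleigh (T : E →ₗ[𝕜] E) :
    BddAbove (Set.range fun x : {x : E // x ≠ 0} => re ⟪T x, x⟫_𝕜 / ‖(x : E)‖ ^ 2) :=
  ⟨‖toContinuousLinearMap T‖, by
    rintro _ ⟨x, rfl⟩
    exact (le_abs_self _).trans ((toContinuousLinearMap T).rayleighQuotient_le_norm x)⟩

namespace LinearMap.IsSymmetric

variable {T : E →ₗ[𝕜] E}

theorem sSup_eigenvalues_eq_iSup_rayleigh [Nontrivial E] (hT : T.IsSymmetric) :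
    sSup {r : ℝ | HasEigenvalue T r} = ⨆ x : {x : E // x ≠ 0}, re ⟪T x, x⟫_𝕜 / ‖(x : E)‖ ^ 2 := by
  refine IsGreatest.csSup_eq ⟨hT.hasEigenvalue_iSup_of_finiteDimensional, fun r hr => ?_⟩
  obtain ⟨v, hv, hv0⟩ := hr.exists_hasEigenvector
  calc r = re ⟪T v, v⟫_𝕜 / ‖v‖ ^ 2 := by
        rw [mem_eigenspace_iff.1 hv, re_inner_ofReal_smul_self,
          mul_div_cancel_right₀ _ (by positivity)]
    _ ≤ _ := le_ciSup T.bddAbove_range_rayleigh ⟨v, hv0⟩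

theorem re_inner_le_sSup_eigenvalues (hT : T.IsSymmetric) {v : E} (hv : ‖v‖ = 1) :
    re ⟪T v, v⟫_𝕜 ≤ sSup {r : ℝ | HasEigenvalue T r} := by
  have hv0 : v ≠ 0 := norm_ne_zero_iff.1 (by simp [hv])
  have : Nontrivial E := nontrivial_of_ne v 0 hv0
  rw [hT.sSup_eigenvalues_eq_iSup_rayleigh]
  simpa [hv] using le_ciSup T.bddAbove_range_rayleigh ⟨v, hv0⟩

theorem exists_norm_eq_one_re_inner_eq_sSup_eigenvalues [Nontrivial E] (hT : T.IsSymmetric) :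
    ∃ v : E, ‖v‖ = 1 ∧ re ⟪T v, v⟫_𝕜 = sSup {r : ℝ | HasEigenvalue T r} := by
  have hμ : HasEigenvalue T (sSup {r : ℝ | HasEigenvalue T r} : ℝ) := by
    rw [hT.sSup_eigenvalues_eq_iSup_rayleigh]
    exact hT.hasEigenvalue_iSup_of_finiteDimensional
  obtain ⟨u, hu, hu0⟩ := hμ.exists_hasEigenvector
  have hv1 := norm_smul_inv_norm (𝕜 := 𝕜) hu0
  refine ⟨_, hv1, ?_⟩
  rw [mem_eigenspace_iff.1 (Submodule.smul_mem _ _ hu), re_inner_ofReal_smul_self, hv1]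
  ring

theorem re_inner_eq_sSup_eigenvalues_iff (hT : T.IsSymmetric) {v : E} (hv : ‖v‖ = 1) :
    re ⟪T v, v⟫_𝕜 = sSup {r : ℝ | HasEigenvalue T r} ↔
      v ∈ eigenspace T (sSup {r : ℝ | HasEigenvalue T r} : ℝ) := by
  refine ⟨fun h => ?_, fun h => by
    rw [mem_eigenspace_iff.1 h, re_inner_ofReal_smul_self, hv, one_pow, mul_one]⟩
  have hv0 : v ≠ 0 := norm_ne_zero_iff.1 (by simp [hv])
  have : Nontrivial E := nontrivial_of_ne v 0 hv0
  have := FiniteDimensional.complete 𝕜 E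
  have hcoe : ∀ x, (hT.toSelfAdjoint : E →L[𝕜] E) x = T x := fun _ => rfl
  -- `v` maximises the Rayleigh quotient, hence is an eigenvector for its maximum
  have hmax : IsMaxOn hT.toSelfAdjoint.1.reApplyInnerSelf (Metric.sphere 0 ‖v‖) v := by
    intro x hx
    have hx1 : ‖x‖ = 1 := by simpa [hv] using hx
    simpa [ContinuousLinearMap.reApplyInnerSelf, hcoe, h] using hT.re_inner_le_sSup_eigenvalues hx1
  simpa [hT.coe_toSelfAdjoint, ContinuousLinearMap.rayleighQuotient,
    ContinuousLinearMap.reApplyInnerSelf, hcoe, ← hT.sSup_eigenvalues_eq_iSup_rayleigh]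
    using (hT.toSelfAdjoint.2.hasEigenvector_of_isMaxOn hv0 hmax).1

end LinearMap.IsSymmetric

end Rayleigh

namespace Matrix.IsHermitian

variable {n : ℕ} {M : Matrix (Fin n) (Fin n) ℂ}

theorem re_inner_le_lambdaMax (hM : M.IsHermitian) {v : EuclideanSpace ℂ (Fin n)}
    (hv : ‖v‖ = 1) : re ⟪toEuclideanLin M v, v⟫_ℂ ≤ lambdaMax M :=
  (isSymmetric_toEuclideanLin_iff.2 hM).re_inner_le_sSup_eigenvalues hv

theorem exists_re_inner_eq_lambdaMax (hM : M.IsHermitian) (hn : 0 < n) :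
    ∃ v : EuclideanSpace ℂ (Fin n), ‖v‖ = 1 ∧ re ⟪toEuclideanLin M v, v⟫_ℂ = lambdaMax M :=
  have : Nonempty (Fin n) := ⟨⟨0, hn⟩⟩
  (isSymmetric_toEuclideanLin_iff.2 hM).exists_norm_eq_one_re_inner_eq_sSup_eigenvalues

theorem re_inner_eq_lambdaMax_iff (hM : M.IsHermitian) {v : EuclideanSpace ℂ (Fin n)}
    (hv : ‖v‖ = 1) :
    re ⟪toEuclideanLin M v, v⟫_ℂ = lambdaMax M ↔
      v ∈ eigenspace (toEuclideanLin M) (lambdaMax M : ℂ) :=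
  (isSymmetric_toEuclideanLin_iff.2 hM).re_inner_eq_sSup_eigenvalues_iff hv

end Matrix.IsHermitian

theorem exists_dotProduct_lt_of_notMem {ι : Type*} [Fintype ι] [DecidableEq ι]
    {K : Set (ι → ℝ)} (hKc : Convex ℝ K) (hK : IsClosed K) {g : ι → ℝ} (hg : g ∉ K) :
    ∃ d, ∀ w ∈ K, w ⬝ᵥ d < g ⬝ᵥ d := by
  obtain ⟨φ, u, hφK, hφg⟩ := geometric_hahn_banach_closed_point hKc hK hg
  have hφ (w : ι → ℝ) : w ⬝ᵥ (dotProductEquiv ℝ ι).symm φ.toLinearMap = φ w := by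
    rw [dotProduct_comm]
    exact LinearMap.congr_fun ((dotProductEquiv ℝ ι).apply_symm_apply _) w
  exact ⟨_, fun w hw => by rw [hφ, hφ]; linarith [hφK w hw]⟩

theorem mem_subdiff_iff {t : ℕ} {f : (Fin t → ℝ) → ℝ} {x₀ g : Fin t → ℝ} :
    g ∈ subdiff f x₀ ↔ ∀ y, g ⬝ᵥ (y - x₀) ≤ f y - f x₀ :=
  Iff.rfl

theorem convex_subdiff {t : ℕ} (f : (Fin t → ℝ) → ℝ) (x₀ : Fin t → ℝ) :
    Convex ℝ (subdiff f x₀) := by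
  have : subdiff f x₀ = ⋂ y, {g | g ⬝ᵥ (y - x₀) ≤ f y - f x₀} := by
    ext
    simp [mem_subdiff_iff]
  rw [this]
  exact convex_iInter fun y => convex_halfSpace_le
    ⟨fun a b => add_dotProduct a b _, fun c a => smul_dotProduct c a _⟩ _

section Pencil

variable {ι m : Type*}

def pencil [Fintype ι] (A₀ : Matrix m m ℂ) (B : ι → Matrix m m ℂ) (x : ι → ℝ) : Matrix m m ℂ :=
  A₀ + ∑ k, (x k : ℂ) • B k

noncomputable def momentVec [Fintype m] [DecidableEq m] (B : ι → Matrix m m ℂ)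
    (v : EuclideanSpace ℂ m) : ι → ℝ :=
  fun k => re ⟪toEuclideanLin (B k) v, v⟫_ℂ

theorem continuous_momentVec [Fintype m] [DecidableEq m] (B : ι → Matrix m m ℂ) :
    Continuous (momentVec B) :=
  continuous_pi fun _ => continuous_re.comp
    ((LinearMap.continuous_of_finiteDimensional _).inner continuous_id)

theorem isHermitian_pencil [Fintype ι] {A₀ : Matrix m m ℂ} {B : ι → Matrix m m ℂ}
    (hA₀ : A₀.IsHermitian) (hB : ∀ k, (B k).IsHermitian) (x : ι → ℝ) :
    (pencil A₀ B x).IsHermitian :=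
  hA₀.add (isSelfAdjoint_sum _ fun k _ => (hB k).smul (Complex.conj_ofReal (x k)))

theorem re_inner_toEuclideanLin_pencil [Fintype ι] [Fintype m] [DecidableEq m]
    (A₀ : Matrix m m ℂ) (B : ι → Matrix m m ℂ) (x : ι → ℝ) (v : EuclideanSpace ℂ m) :
    re ⟪toEuclideanLin (pencil A₀ B x) v, v⟫_ℂ =
      re ⟪toEuclideanLin A₀ v, v⟫_ℂ + momentVec B v ⬝ᵥ x := by
  have hlin : toEuclideanLin (pencil A₀ B x) v =
      toEuclideanLin A₀ v + ∑ k, (x k : ℂ) • toEuclideanLin (B k) v := by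
    simp only [pencil, map_add, map_sum, map_smul, LinearMap.add_apply, LinearMap.coe_sum,
      Finset.sum_apply, LinearMap.smul_apply]
  rw [hlin, inner_add_left, sum_inner, map_add, map_sum]
  simp [momentVec, dotProduct, mul_comm]

end Pencil

section LambdaMaxPencil

variable {n t : ℕ} {A₀ : Matrix (Fin n) (Fin n) ℂ} {B : Fin t → Matrix (Fin n) (Fin n) ℂ}

theorem momentVec_mem_subdiff (hA₀ : A₀.IsHermitian) (hB : ∀ k, (B k).IsHermitian)
    {x₀ : Fin t → ℝ} {v : EuclideanSpace ℂ (Fin n)}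
    (hv : v ∈ eigenspace (toEuclideanLin (pencil A₀ B x₀)) (lambdaMax (pencil A₀ B x₀) : ℂ))
    (hv1 : ‖v‖ = 1) :
    momentVec B v ∈ subdiff (fun x => lambdaMax (pencil A₀ B x)) x₀ := by
  refine mem_subdiff_iff.2 fun y => ?_
  have hy := (isHermitian_pencil hA₀ hB y).re_inner_le_lambdaMax hv1
  have hx₀ := ((isHermitian_pencil hA₀ hB x₀).re_inner_eq_lambdaMax_iff hv1).2 hv
  rw [re_inner_toEuclideanLin_pencil] at hy hx₀
  rw [dotProduct_sub]
  linarith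

theorem exists_dotProduct_le_momentVec (hn : 0 < n) (hA₀ : A₀.IsHermitian)
    (hB : ∀ k, (B k).IsHermitian) {x₀ g : Fin t → ℝ}
    (hg : g ∈ subdiff (fun x => lambdaMax (pencil A₀ B x)) x₀) (d : Fin t → ℝ) :
    ∃ v ∈ eigenspace (toEuclideanLin (pencil A₀ B x₀)) (lambdaMax (pencil A₀ B x₀) : ℂ),
      ‖v‖ = 1 ∧ g ⬝ᵥ d ≤ momentVec B v ⬝ᵥ d := by
  have hA (x : Fin t → ℝ) := isHermitian_pencil hA₀ hB x
  have hle : ∀ v ∈ Metric.sphere (0 : EuclideanSpace ℂ (Fin n)) 1,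
      re ⟪toEuclideanLin (pencil A₀ B x₀) v, v⟫_ℂ ≤ lambdaMax (pencil A₀ B x₀) :=
    fun v hv => (hA x₀).re_inner_le_lambdaMax (mem_sphere_zero_iff_norm.1 hv)
  have hpert : ∀ s > 0, ∃ v ∈ Metric.sphere (0 : EuclideanSpace ℂ (Fin n)) 1,
      lambdaMax (pencil A₀ B x₀) + s * (g ⬝ᵥ d) ≤
        re ⟪toEuclideanLin (pencil A₀ B x₀) v, v⟫_ℂ + s * (momentVec B v ⬝ᵥ d) := by
    intro s hs
    obtain ⟨v, hv1, hv⟩ := (hA (x₀ + s • d)).exists_re_inner_eq_lambdaMax hn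
    have hsub := mem_subdiff_iff.1 hg (x₀ + s • d)
    rw [re_inner_toEuclideanLin_pencil, dotProduct_add, dotProduct_smul, smul_eq_mul] at hv
    rw [add_sub_cancel_left, dotProduct_smul, smul_eq_mul] at hsub
    refine ⟨v, mem_sphere_zero_iff_norm.2 hv1, ?_⟩
    rw [re_inner_toEuclideanLin_pencil]
    linarith
  obtain ⟨v, hv1, hvR, hvd⟩ := (isCompact_sphere _ _).exists_eq_and_le_of_forall_pos
    (by fun_prop) ((continuous_momentVec B).dotProduct continuous_const) hle hpert
  rw [mem_sphere_zero_iff_norm] at hv1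
  exact ⟨v, ((hA x₀).re_inner_eq_lambdaMax_iff hv1).1 hvR, hv1, hvd⟩

end LambdaMaxPencil

/-- The subdifferential of `x ↦ λ_max(A₀ + ∑ x_k B_k)` at `x₀` equals the
moment of the eigenspace of `λ_max(A(x₀))`. -/
theorem subdiff_lambdaMax_eq_moment {n t : ℕ} (hn : 0 < n)
    (A₀ : Matrix (Fin n) (Fin n) ℂ) (hA₀ : A₀.IsHermitian)
    (B : Fin t → Matrix (Fin n) (Fin n) ℂ) (hB : ∀ k, (B k).IsHermitian)
    (x₀ : Fin t → ℝ)
    (A : (Fin t → ℝ) → Matrix (Fin n) (Fin n) ℂ)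
    (hA : A = fun x => A₀ + ∑ k, ((x k : ℂ)) • B k)
    (Smax : Submodule ℂ (EuclideanSpace ℂ (Fin n)))
    (hSmax : Smax = Module.End.eigenspace
      (Matrix.toEuclideanLin (A x₀)) ((lambdaMax (A x₀) : ℂ))) :
    subdiff (fun x => lambdaMax (A x)) x₀ =
      convexHull ℝ {w : Fin t → ℝ | ∃ v ∈ Smax, ‖v‖ = 1 ∧
        ∀ k, w k = (inner ℂ (Matrix.toEuclideanLin (B k) v) v : ℂ).re} := by
  obtain rfl : A = pencil A₀ B := hA
  have hM : {w : Fin t → ℝ | ∃ v ∈ Smax, ‖v‖ = 1 ∧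
      ∀ k, w k = (inner ℂ (Matrix.toEuclideanLin (B k) v) v : ℂ).re} =
      momentVec B '' (Smax ∩ Metric.sphere 0 1) := by
    ext w
    simp [funext_iff, momentVec, eq_comm, and_assoc]
  rw [hM]
  refine Subset.antisymm (fun g hg => ?_) ?_
  · by_contra hgK
    have hK : IsCompact (convexHull ℝ (momentVec B '' (Smax ∩ Metric.sphere 0 1))) :=
      (((isCompact_sphere 0 1).inter_left Smax.closed_of_finiteDimensional).image
        (continuous_momentVec B)).convexHull_of_finiteDimensional
    obtain ⟨d, hd⟩ := exists_dotProduct_lt_of_notMem (convex_convexHull ℝ _) hK.isClosed hgK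
    obtain ⟨v, hvS, hv1, hv⟩ := exists_dotProduct_le_momentVec hn hA₀ hB hg d
    exact (hd _ (subset_convexHull ℝ _
      ⟨v, ⟨hSmax ▸ hvS, mem_sphere_zero_iff_norm.2 hv1⟩, rfl⟩)).not_ge hv
  · refine convexHull_min ?_ (convex_subdiff _ _)
    rintro _ ⟨v, ⟨hvS, hv1⟩, rfl⟩
    exact momentVec_mem_subdiff hA₀ hB (hSmax ▸ hvS) (mem_sphere_zero_iff_norm.1 hv1)
end
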